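/- Let p be a prime, E a nonempty finite subset of ℚ_p, and ν = ∑_{x∈E} α_x δ_x a discrete signed measure with α_x ∈ ℤ \ {0}. Define ν̂(ξ) = ∑_{x∈E} α_x · conj(χ(ξx)). If ν̂(ξ) = 0 for some ξ, then ν̂(ξ·ζ) = 0 for all units ζ ∈ ℤ_p^×. -/

import Mathlib

open scoped BigOperators

/-- Every `p`-adic number is within distance `1` of a rational of the form `k / p^n`. -/
theorem padicFrac_exists (p : ℕ) [hp : Fact p.Prime] (x : ℚ_[p]) :
    ∃ kn : ℤ × ℕ, ‖x - (kn.1 : ℚ_[p]) / (p : ℚ_[p]) ^ kn.2‖ ≤ 1 := by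
  obtain ⟨n, hn⟩ := exists_nat_gt ‖x‖
  have hp1 : 1 < (p : ℝ) := by exact_mod_cast hp.out.one_lt
  have hple : (n : ℝ) < (p : ℝ) ^ n := by exact_mod_cast (Nat.lt_pow_self hp.out.one_lt : n < p ^ n)
  have hz : ‖x * (p : ℚ_[p]) ^ n‖ ≤ 1 := by
    rw [norm_mul, norm_pow, Padic.norm_p]
    have h1 : ‖x‖ ≤ (p : ℝ) ^ n := le_of_lt (lt_trans hn hple)
    have h2 : (0:ℝ) < (p : ℝ) ^ n := by positivity
    calc ‖x‖ * ((p:ℝ)⁻¹) ^ n ≤ (p : ℝ) ^ n * ((p:ℝ)⁻¹) ^ n := by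
          gcongr
      _ = 1 := by rw [← mul_pow, mul_inv_cancel₀ (ne_of_gt (by linarith)), one_pow]
  set z : ℤ_[p] := ⟨x * (p : ℚ_[p]) ^ n, hz⟩ with hzdef
  obtain ⟨y, hy⟩ := Ideal.mem_span_singleton'.mp (PadicInt.appr_spec n z)
  refine ⟨((z.appr n : ℤ), n), ?_⟩
  have hpne : ((p : ℚ_[p]) ^ n) ≠ 0 := by
    apply pow_ne_zero
    exact_mod_cast hp.out.ne_zero
  have hxz : x - ((z.appr n : ℤ) : ℚ_[p]) / (p : ℚ_[p]) ^ n
      = ((z - (z.appr n : ℤ_[p]) : ℤ_[p]) : ℚ_[p]) / (p : ℚ_[p]) ^ n := by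
    push_cast
    field_simp [hzdef]
    rfl
  rw [hxz, norm_div]
  have hnorm : ‖((z - (z.appr n : ℤ_[p]) : ℤ_[p]) : ℚ_[p])‖ ≤ ((p:ℝ)⁻¹) ^ n := by
    rw [← PadicInt.norm_def, ← hy]
    rw [norm_mul, norm_pow, PadicInt.norm_p]
    calc ‖y‖ * ((p:ℝ)⁻¹) ^ n ≤ 1 * ((p:ℝ)⁻¹) ^ n := by
          gcongr; exact y.2
      _ = ((p:ℝ)⁻¹) ^ n := one_mul _
  have hden : ‖(p : ℚ_[p]) ^ n‖ = ((p:ℝ)⁻¹) ^ n := by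
    rw [norm_pow, Padic.norm_p]
  rw [hden]
  rw [div_le_one (by positivity)]
  exact hnorm

/-- The standard additive character `χ(x) = e^{2πi {x}}` on `ℚ_p`, where `{x}` is
the `p`-adic fractional part of `x`. -/
noncomputable def stdChar (p : ℕ) [Fact p.Prime] (x : ℚ_[p]) : ℂ :=
  Complex.exp (2 * Real.pi * Complex.I *
    (((Classical.choose (padicFrac_exists p x)).1 : ℂ) /
      (p : ℂ) ^ (Classical.choose (padicFrac_exists p x)).2))

lemma zpow_congr_mod {ω : ℂ} (hne : ω ≠ 0) {n : ℕ} (hω : ω ^ n = 1) {a b : ℤ}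
    (h : a % (n : ℤ) = b % (n : ℤ)) : ω ^ a = ω ^ b := by
  have key : ∀ c : ℤ, ω ^ c = ω ^ (c % (n : ℤ)) := by
    intro c
    conv_lhs => rw [← Int.mul_ediv_add_emod c n]
    rw [zpow_add₀ hne, mul_comm, zpow_mul, zpow_natCast, hω, one_zpow, mul_one]
  rw [key a, key b, h]

lemma frac_diff_int (p : ℕ) [hp : Fact p.Prime] (k k' : ℤ) (n n' : ℕ)
    (h : ‖(k : ℚ_[p]) / (p : ℚ_[p]) ^ n - (k' : ℚ_[p]) / (p : ℚ_[p]) ^ n'‖ ≤ 1) :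
    ∃ m : ℤ, (k : ℂ) / (p : ℂ) ^ n - (k' : ℂ) / (p : ℂ) ^ n' = m := by
  have hp0 : (p : ℚ_[p]) ≠ 0 := by exact_mod_cast hp.out.ne_zero
  have hpC : (p : ℂ) ≠ 0 := by exact_mod_cast hp.out.ne_zero
  set a : ℤ := k * p ^ n' - k' * p ^ n with ha
  have hid : (a : ℚ_[p]) = ((k : ℚ_[p]) / (p : ℚ_[p]) ^ n - (k' : ℚ_[p]) / (p : ℚ_[p]) ^ n')
      * (p : ℚ_[p]) ^ (n + n') := by
    rw [ha]
    push_cast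
    field_simp
    ring
  have hnorm : ‖(a : ℚ_[p])‖ ≤ (p : ℝ) ^ (-((n + n' : ℕ) : ℤ)) := by
    rw [hid, norm_mul, norm_pow, Padic.norm_p]
    have heq : ((p:ℝ)⁻¹) ^ (n + n') = (p : ℝ) ^ (-((n + n' : ℕ) : ℤ)) := by
      rw [inv_pow, ← zpow_natCast, ← zpow_neg]
    rw [← heq]
    calc _ ≤ 1 * ((p:ℝ)⁻¹) ^ (n + n') := by gcongr
      _ = _ := one_mul _
  obtain ⟨m, hm⟩ := (Padic.norm_int_le_pow_iff_dvd a (n + n')).mp hnorm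
  refine ⟨m, ?_⟩
  rw [ha] at hm
  have hC : (k : ℂ) * (p:ℂ) ^ n' - (k' : ℂ) * (p:ℂ) ^ n = (p : ℂ) ^ (n + n') * (m : ℂ) := by
    exact_mod_cast congrArg (fun z : ℤ => (z : ℂ)) hm
  field_simp
  linear_combination hC

lemma stdChar_eq (p : ℕ) [hp : Fact p.Prime] (x : ℚ_[p]) (k : ℤ) (n : ℕ)
    (h : ‖x - (k : ℚ_[p]) / (p : ℚ_[p]) ^ n‖ ≤ 1) :
    stdChar p x = Complex.exp (2 * Real.pi * Complex.I * ((k : ℂ) / (p : ℂ) ^ n)) := by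
  unfold stdChar
  set c := Classical.choose (padicFrac_exists p x) with hc
  have hspec := Classical.choose_spec (padicFrac_exists p x)
  rw [← hc] at hspec
  have hd : ‖(c.1 : ℚ_[p]) / (p : ℚ_[p]) ^ c.2 - (k : ℚ_[p]) / (p : ℚ_[p]) ^ n‖ ≤ 1 := by
    have : (c.1 : ℚ_[p]) / (p : ℚ_[p]) ^ c.2 - (k : ℚ_[p]) / (p : ℚ_[p]) ^ n
        = (x - (k : ℚ_[p]) / (p : ℚ_[p]) ^ n) + -(x - (c.1 : ℚ_[p]) / (p : ℚ_[p]) ^ c.2) := by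
      ring
    rw [this]
    refine le_trans (Padic.nonarchimedean _ _) ?_
    rw [norm_neg]
    exact max_le h hspec
  obtain ⟨m, hm⟩ := frac_diff_int p c.1 k c.2 n hd
  rw [Complex.exp_eq_exp_iff_exists_int]
  exact ⟨m, by rw [← hm]; ring⟩

lemma exp_frac_eq_omega_zpow (p : ℕ) (hp : (p:ℂ) ≠ 0) {n N : ℕ} (hn : n ≤ N) (k : ℤ) :
    Complex.exp (2 * Real.pi * Complex.I * ((k : ℂ) / (p : ℂ) ^ n))
      = (Complex.exp (2 * Real.pi * Complex.I / (p : ℂ) ^ N)) ^ (k * (p : ℤ) ^ (N - n)) := by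
  rw [← Complex.exp_int_mul]
  congr 1
  have hNn : (p : ℂ) ^ N = (p : ℂ) ^ n * (p : ℂ) ^ (N - n) := by
    rw [← pow_add, Nat.add_sub_cancel' hn]
  push_cast
  rw [hNn]
  field_simp

lemma conj_exp_frac (p n : ℕ) (k : ℤ) :
    (starRingEnd ℂ) (Complex.exp (2 * Real.pi * Complex.I * ((k : ℂ) / (p : ℂ) ^ n)))
      = Complex.exp (2 * Real.pi * Complex.I * (((-k : ℤ) : ℂ) / (p : ℂ) ^ n)) := by
  rw [← Complex.exp_conj]
  congr 1
  simp [map_mul, map_div₀, map_pow, Complex.conj_I, Complex.conj_ofReal, map_ofNat]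
  ring

theorem stmt8 (p : ℕ) [Fact p.Prime] (E : Finset ℚ_[p]) (hE : E.Nonempty)
    (α : ℚ_[p] → ℤ) (hα : ∀ x ∈ E, α x ≠ 0) (ξ : ℚ_[p])
    (h : ∑ x ∈ E, (α x : ℂ) * (starRingEnd ℂ) (stdChar p (ξ * x)) = 0) :
    ∀ ζ : ℚ_[p], ‖ζ‖ = 1 →
      ∑ x ∈ E, (α x : ℂ) * (starRingEnd ℂ) (stdChar p ((ξ * ζ) * x)) = 0 := by
  intro ζ hζ
  classical
  have hp : p.Prime := Fact.out
  have hpC : (p : ℂ) ≠ 0 := by exact_mod_cast hp.ne_zero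
  have hp0Q : (p : ℚ_[p]) ≠ 0 := by exact_mod_cast hp.ne_zero
  have hpR1 : 1 < (p : ℝ) := by exact_mod_cast hp.one_lt
  set k : ℚ_[p] → ℤ := fun x => (Classical.choose (padicFrac_exists p (ξ * x))).1 with hk
  set n : ℚ_[p] → ℕ := fun x => (Classical.choose (padicFrac_exists p (ξ * x))).2 with hn
  have hspec : ∀ x, ‖ξ * x - (k x : ℚ_[p]) / (p : ℚ_[p]) ^ (n x)‖ ≤ 1 :=
    fun x => Classical.choose_spec (padicFrac_exists p (ξ * x))
  set N : ℕ := (E.sup' hE n) + 1 with hNdef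
  have hnN : ∀ x ∈ E, n x ≤ N := fun x hx =>
    le_trans (Finset.le_sup' n hx) (Nat.le_succ _)
  have hpN0 : (p : ℕ) ^ N ≠ 0 := pow_ne_zero _ hp.ne_zero
  set ω : ℂ := Complex.exp (2 * Real.pi * Complex.I / ((p : ℂ) ^ N)) with hωdef
  have hprim : IsPrimitiveRoot ω (p ^ N) := by
    have h1 := Complex.isPrimitiveRoot_exp (p ^ N) hpN0
    have : ((p ^ N : ℕ) : ℂ) = (p : ℂ) ^ N := by push_cast; ring
    rwa [this] at h1
  have hωpow : ω ^ (p ^ N) = 1 := hprim.pow_eq_one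
  have hωne : ω ≠ 0 := Complex.exp_ne_zero _
  -- approximate ζ by an integer u coprime to p
  have hζ1 : ‖ζ‖ ≤ 1 := le_of_eq hζ
  set z : ℤ_[p] := ⟨ζ, hζ1⟩ with hzdef
  set u : ℕ := z.appr N with hudef
  obtain ⟨w, hw⟩ := Ideal.mem_span_singleton'.mp (PadicInt.appr_spec N z)
  have hζu : ‖ζ - (u : ℚ_[p])‖ ≤ (p : ℝ) ^ (-(N : ℤ)) := by
    have hcoe : ζ - (u : ℚ_[p]) = ((z - (u : ℤ_[p]) : ℤ_[p]) : ℚ_[p]) := by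
      rfl
    rw [← hudef] at hw
    rw [hcoe, ← PadicInt.norm_def, ← hw, norm_mul, norm_pow, PadicInt.norm_p]
    calc ‖w‖ * ((p:ℝ)⁻¹) ^ N ≤ 1 * ((p:ℝ)⁻¹) ^ N := by gcongr; exact w.2
      _ = (p : ℝ) ^ (-(N : ℤ)) := by
          rw [one_mul, inv_pow, ← zpow_natCast, ← zpow_neg]
  have hlt1 : (p : ℝ) ^ (-(N : ℤ)) < 1 := by
    apply zpow_lt_one_of_neg₀ hpR1
    have hN0 : 0 < N := Nat.succ_pos _
    omega
  have hun : ‖(u : ℚ_[p])‖ = 1 := by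
    have hqr : ((u : ℚ_[p]) - ζ) + ζ = (u : ℚ_[p]) := by ring
    have hne : ‖(u : ℚ_[p]) - ζ‖ ≠ ‖ζ‖ := by
      rw [hζ, norm_sub_rev]
      exact ne_of_lt (lt_of_le_of_lt hζu hlt1)
    have := Padic.add_eq_max_of_ne hne
    rw [hqr, hζ] at this
    rw [this, norm_sub_rev]
    exact max_eq_right (le_of_lt (lt_of_le_of_lt hζu hlt1)) |>.trans rfl
  have hpu : ¬ (p ∣ u) := by
    intro hdvd
    have : ‖((u : ℤ) : ℚ_[p])‖ < 1 :=
      Padic.norm_intCast_lt_one_iff.mpr (by exact_mod_cast hdvd)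
    rw [show (((u : ℤ) : ℚ_[p])) = (u : ℚ_[p]) by push_cast; ring, hun] at this
    exact lt_irrefl _ this
  have hcop : Nat.Coprime u (p ^ N) :=
    Nat.Coprime.pow_right N ((hp.coprime_iff_not_dvd.mpr hpu).symm)
  -- exponents
  set m : ℚ_[p] → ℤ := fun x => -(k x * (p : ℤ) ^ (N - n x)) with hm
  have hval1 : ∀ x ∈ E, (starRingEnd ℂ) (stdChar p (ξ * x)) = ω ^ (m x) := by
    intro x hx
    rw [stdChar_eq p (ξ * x) (k x) (n x) (hspec x), conj_exp_frac]
    have h2 := exp_frac_eq_omega_zpow p hpC (hnN x hx) (-(k x))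
    rw [h2, ← hωdef]
    congr 1
    simp only [hm]
    ring
  have hval2 : ∀ x ∈ E, (starRingEnd ℂ) (stdChar p ((ξ * ζ) * x)) = ω ^ ((u : ℤ) * m x) := by
    intro x hx
    have happrox : ‖(ξ * ζ) * x - (((u : ℤ) * k x : ℤ) : ℚ_[p]) / (p : ℚ_[p]) ^ (n x)‖ ≤ 1 := by
      have hidd : (ξ * ζ) * x - (((u : ℤ) * k x : ℤ) : ℚ_[p]) / (p : ℚ_[p]) ^ (n x)
          = ζ * (ξ * x - (k x : ℚ_[p]) / (p : ℚ_[p]) ^ (n x))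
            + (ζ - (u : ℚ_[p])) * ((k x : ℚ_[p]) / (p : ℚ_[p]) ^ (n x)) := by
        push_cast
        field_simp
        ring
      rw [hidd]
      refine le_trans (Padic.nonarchimedean _ _) (max_le ?_ ?_)
      · rw [norm_mul, hζ, one_mul]; exact hspec x
      · rw [norm_mul, norm_div, norm_pow, Padic.norm_p]
        have hkx : ‖(k x : ℚ_[p])‖ ≤ 1 := Padic.norm_int_le_one _
        have hinv : ((p:ℝ)⁻¹) ^ (n x) = (p : ℝ) ^ (-(n x : ℤ)) := by
          rw [inv_pow, ← zpow_natCast, ← zpow_neg]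
        rw [hinv]
        calc ‖ζ - (u : ℚ_[p])‖ * (‖(k x : ℚ_[p])‖ / (p : ℝ) ^ (-(n x : ℤ)))
            ≤ (p : ℝ) ^ (-(N : ℤ)) * (1 / (p : ℝ) ^ (-(n x : ℤ))) := by
              gcongr
          _ = (p : ℝ) ^ ((n x : ℤ) - N) := by
              rw [one_div, ← zpow_neg, neg_neg, ← zpow_add₀ (by positivity : (p:ℝ) ≠ 0)]
              congr 1 <;> ring
          _ ≤ 1 := by
              apply zpow_le_one_of_nonpos₀ (le_of_lt hpR1)
              have := hnN x hx
              omega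
    rw [stdChar_eq p _ _ _ happrox, conj_exp_frac]
    have h2 := exp_frac_eq_omega_zpow p hpC (hnN x hx) (-((u : ℤ) * k x))
    rw [h2, ← hωdef]
    congr 1
    simp only [hm]
    ring
  -- rewrite goal and hypothesis
  rw [Finset.sum_congr rfl (fun x hx => by rw [hval2 x hx])]
  have hsum1 : ∑ x ∈ E, (α x : ℂ) * ω ^ (m x) = 0 := by
    rw [← h]
    exact Finset.sum_congr rfl (fun x hx => by rw [hval1 x hx]) |>.symm
  -- reduce exponents mod p^N
  set e : ℚ_[p] → ℕ := fun x => (m x % ((p : ℤ) ^ N)).toNat with he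
  have hpNint : ((p ^ N : ℕ) : ℤ) = (p : ℤ) ^ N := by push_cast; ring
  have heint : ∀ x, (e x : ℤ) = m x % ((p : ℤ) ^ N) := fun x =>
    Int.toNat_of_nonneg (Int.emod_nonneg _ (pow_ne_zero _ (by exact_mod_cast hp.ne_zero)))
  have hmodeq : ∀ x, m x % (((p ^ N : ℕ) : ℤ)) = ((e x : ℤ)) % (((p ^ N : ℕ) : ℤ)) := by
    intro x
    rw [hpNint, heint x, Int.emod_emod_of_dvd _ dvd_rfl]
  have hωe : ∀ x, ω ^ (m x) = ω ^ (e x) := by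
    intro x
    rw [← zpow_natCast ω (e x)]
    exact zpow_congr_mod hωne hωpow (hmodeq x)
  -- polynomial argument
  set f : Polynomial ℚ := ∑ x ∈ E, Polynomial.C ((α x : ℚ)) * Polynomial.X ^ (e x) with hf
  have haeval : ∀ t : ℂ, (Polynomial.aeval t) f = ∑ x ∈ E, (α x : ℂ) * t ^ (e x) := by
    intro t
    rw [hf, map_sum]
    refine Finset.sum_congr rfl fun x hx => ?_
    simp [map_intCast]
  have hf0 : (Polynomial.aeval ω) f = 0 := by
    rw [haeval]
    rw [← hsum1]
    exact Finset.sum_congr rfl fun x hx => by rw [hωe x]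
  have hpos : 0 < p ^ N := pow_pos hp.pos N
  have hdvd := minpoly.dvd ℚ ω hf0
  rw [← Polynomial.cyclotomic_eq_minpoly_rat hprim hpos] at hdvd
  obtain ⟨g, hg⟩ := hdvd
  have hprim' : IsPrimitiveRoot (ω ^ u) (p ^ N) := hprim.pow_of_coprime u hcop
  have haeval' : (Polynomial.aeval (ω ^ u)) f = 0 := by
    rw [hg, map_mul, Polynomial.cyclotomic_eq_minpoly_rat hprim' hpos, minpoly.aeval, zero_mul]
  rw [haeval] at haeval'
  rw [← haeval']
  refine Finset.sum_congr rfl fun x hx => ?_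
  congr 1
  rw [← pow_mul, ← zpow_natCast ω (u * e x)]
  apply zpow_congr_mod hωne hωpow
  push_cast [hpNint]
  exact Int.ModEq.mul_left (u : ℤ) (by rw [hpNint] at hmodeq; exact hmodeq x)
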